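/- arXiv:1903.11566 — 2 statements merged into one kernel-verified Lean document; each statement's English description precedes it below -/
import Mathlib

section
/- Let R be a commutative unital ring and T a tree on vertex set V = {1,…,n}, n ≥ 2, with edge set E, where each edge {i,j} carries an additive weight a_{ij} = a_{ji} ∈ R and two directed multiplicative weights m_{i→j}, m_{j→i} ∈ R; for e = {i,j} write a_e = a_{ij} and (m_e, m'_e) = (m_{i→j}, m_{j→i}). Let D_T be the distance matrix with (D_T)_{ii} = 0 and (D_T)_{ij} = Σ_{l=0}^{k−1} a_{i_l i_{l+1}}(m_{i_l → i_{l+1}} − 1)·Π_{u=0}^{l−1} m_{i_u → i_{u+1}} along the unique path i = i_0, …, i_k = j. For a vertex v_0 ∈ V, let u ∈ R^{V∖{v_0}} be the column of D_T above v_0 (u_v = (D_T)_{v,v_0}), w ∈ R^{V∖{v_0}} the row of D_T at v_0 (w_v = (D_T)_{v_0,v}), and m ∈ R^{V∖{v_0}} the vector with m_v equal to the product of the directed multiplicative weights along the unique path from v to v_0. Define κ(D_T, v_0) := det( D₀ − u·eᵀ − m·wᵀ ), where D₀ is the submatrix of D_T on rows and columns V∖{v_0} and e is the all-ones vector. Then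 for every vertex v_0 ∈ V, κ(D_T, v_0) = Π_{e ∈ E} a_e·(1 − m_e m'_e); in particular κ(D_T, v_0) is independent of the choice of v_0 and of the tree structure, and is multiplicative over the edges. -/
open SimpleGraph

/-- general-V version of wWt -/
def wWtV {R : Type*} [CommRing R] {V : Type*} {G : SimpleGraph V}
    (a m : V → V → R) {i j : V} (p : G.Walk i j) : R :=
  p.darts.foldr
    (fun d acc => a d.toProd.1 d.toProd.2 * (m d.toProd.1 d.toProd.2 - 1)
      + m d.toProd.1 d.toProd.2 * acc) 0

lemma wWtV_nil {R : Type*} [CommRing R] {V : Type*} {G : SimpleGraph V}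
    (a m : V → V → R) (i : V) : wWtV a m (SimpleGraph.Walk.nil : G.Walk i i) = 0 := rfl

lemma wWtV_cons {R : Type*} [CommRing R] {V : Type*} {G : SimpleGraph V}
    (a m : V → V → R) {i w j : V} (h : G.Adj i w) (p : G.Walk w j) :
    wWtV a m (SimpleGraph.Walk.cons h p) = a i w * (m i w - 1) + m i w * wWtV a m p := rfl

/-- product of m along a walk -/
def mProd {R : Type*} [CommRing R] {V : Type*} {G : SimpleGraph V}
    (m : V → V → R) {i j : V} (p : G.Walk i j) : R :=
  (p.darts.map fun d => m d.toProd.1 d.toProd.2).prod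

lemma mProd_nil {R : Type*} [CommRing R] {V : Type*} {G : SimpleGraph V}
    (m : V → V → R) (i : V) : mProd m (SimpleGraph.Walk.nil : G.Walk i i) = 1 := rfl

lemma mProd_cons {R : Type*} [CommRing R] {V : Type*} {G : SimpleGraph V}
    (m : V → V → R) {i w j : V} (h : G.Adj i w) (p : G.Walk w j) :
    mProd m (SimpleGraph.Walk.cons h p) = m i w * mProd m p := by
  simp [mProd]

section Leaf
variable {R : Type*} [CommRing R] {V : Type*} {G : SimpleGraph V}

lemma D_self (a m : V → V → R) (D : Matrix V V R)
    (hD : ∀ (i j : V) (p : G.Walk i j), p.IsPath → D i j = wWtV a m p) (v : V) :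
    D v v = 0 := by
  simpa [wWtV_nil] using hD v v SimpleGraph.Walk.nil SimpleGraph.Walk.IsPath.nil

lemma D_adj (a m : V → V → R) (D : Matrix V V R)
    (hD : ∀ (i j : V) (p : G.Walk i j), p.IsPath → D i j = wWtV a m p)
    {x y : V} (h : G.Adj x y) :
    D x y = a x y * (m x y - 1) := by
  have hp : (SimpleGraph.Walk.cons h SimpleGraph.Walk.nil).IsPath := by
    rw [SimpleGraph.Walk.cons_isPath_iff]
    exact ⟨SimpleGraph.Walk.IsPath.nil, by simp [h.ne]⟩
  have := hD x y (SimpleGraph.Walk.cons h SimpleGraph.Walk.nil) hp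
  rw [this, wWtV_cons, wWtV_nil]; ring

variable {ℓ p : V}

lemma leaf_D (hG : G.IsTree) (huniq : ∀ w, G.Adj ℓ w → w = p) (a m : V → V → R) (D : Matrix V V R)
    (hD : ∀ (i j : V) (p : G.Walk i j), p.IsPath → D i j = wWtV a m p)
    {j : V} (hj : j ≠ ℓ) :
    D ℓ j = a ℓ p * (m ℓ p - 1) + m ℓ p * D p j := by
  obtain ⟨q, hq, -⟩ := hG.existsUnique_path ℓ j
  cases q with
  | nil => exact absurd rfl hj
  | @cons _ w _ h q' =>
    have hw : w = p := huniq w h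
    subst hw
    rw [hD ℓ j _ hq, wWtV_cons, hD _ j q' hq.of_cons]

lemma leaf_mv (hG : G.IsTree) (huniq : ∀ w, G.Adj ℓ w → w = p) (m : V → V → R) (v0 : V) (mv : V → R)
    (hmv : ∀ (v : V) (q : G.Walk v v0), q.IsPath → mv v = mProd m q)
    (hl : ℓ ≠ v0) :
    mv ℓ = m ℓ p * mv p := by
  obtain ⟨q, hq, -⟩ := hG.existsUnique_path ℓ v0
  cases q with
  | nil => exact absurd rfl hl
  | @cons _ w _ h q' =>
    have hw : w = p := huniq w h
    subst hw
    rw [hmv ℓ _ hq, mProd_cons, hmv _ q' hq.of_cons]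

lemma mv_root (m : V → V → R) (v0 : V) (mv : V → R)
    (hmv : ∀ (v : V) (q : G.Walk v v0), q.IsPath → mv v = mProd m q) :
    mv v0 = 1 := by
  simpa [mProd_nil] using hmv v0 SimpleGraph.Walk.nil SimpleGraph.Walk.IsPath.nil

/-- A path between two non-`ℓ` vertices avoids the leaf `ℓ`. -/
lemma leaf_avoid (huniq : ∀ w, G.Adj ℓ w → w = p) :
    ∀ {x j : V} (w : G.Walk x j), w.IsPath → x ≠ ℓ → j ≠ ℓ → ℓ ∉ w.support := by
  intro x j w
  induction w with
  | nil => intro _ hx _; simp [Ne.symm hx]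
  | @cons x y j h w' ih =>
    intro hp hx hj
    rw [SimpleGraph.Walk.support_cons, List.mem_cons]
    rintro (rfl | hmem)
    · exact hx rfl
    by_cases hy : y = ℓ
    · subst hy
      cases w' with
      | nil => exact hj rfl
      | @cons _ z _ h2 w'' =>
        have hz : z = p := huniq z h2
        have hxp : x = p := huniq x h.symm
        rw [SimpleGraph.Walk.cons_isPath_iff] at hp
        exact hp.2 (by
          rw [SimpleGraph.Walk.support_cons, List.mem_cons]
          right
          rw [hxp, ← hz]
          exact SimpleGraph.Walk.start_mem_support w'')
    · exact ih hp.of_cons hy hj hmem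

end Leaf

section Sub
variable {R : Type*} [CommRing R] {V : Type*} {G : SimpleGraph V} {P : V → Prop}

lemma wWtV_map (a m : V → V → R) :
    ∀ {i j : {v : V // P v}} (q : (G.comap (Subtype.val : {v // P v} → V)).Walk i j),
      wWtV (fun i j => a i.1 j.1) (fun i j => m i.1 j.1) q
        = wWtV a m (q.map (SimpleGraph.Hom.comap Subtype.val G)) := by
  intro i j q
  induction q with
  | nil => rfl
  | cons h q' ih => rw [SimpleGraph.Walk.map_cons, wWtV_cons, wWtV_cons, ih]; rfl

lemma mProd_map (m : V → V → R) :
    ∀ {i j : {v : V // P v}} (q : (G.comap (Subtype.val : {v // P v} → V)).Walk i j),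
      mProd (fun i j => m i.1 j.1) q = mProd m (q.map (SimpleGraph.Hom.comap Subtype.val G)) := by
  intro i j q
  induction q with
  | nil => rfl
  | cons h q' ih => rw [SimpleGraph.Walk.map_cons, mProd_cons, mProd_cons, ih]; rfl

lemma reach_lift :
    ∀ {x j : V} (w : G.Walk x j) (hx : P x) (hj : P j), (∀ y ∈ w.support, P y) →
      (G.comap (Subtype.val : {v // P v} → V)).Reachable ⟨x, hx⟩ ⟨j, hj⟩ := by
  intro x j w
  induction w with
  | nil => intro hx hj _; rfl
  | @cons x y j h w' ih =>
    intro hx hj hsup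
    have hy : P y := hsup y (by simp [SimpleGraph.Walk.support_cons,
      SimpleGraph.Walk.start_mem_support])
    have hadj : (G.comap (Subtype.val : {v // P v} → V)).Adj ⟨x, hx⟩ ⟨y, hy⟩ := h
    exact (hadj.reachable).trans (ih hy hj fun z hz => hsup z (by
      simp [SimpleGraph.Walk.support_cons, hz]))

end Sub

section LeafEx
variable {V : Type*} [Fintype V] [DecidableEq V] {G : SimpleGraph V} [DecidableRel G.Adj]

lemma degree_pos_of_connected (hG : G.Connected) (h2 : 2 ≤ Fintype.card V) (v : V) :
    0 < G.degree v := by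
  rw [SimpleGraph.degree_pos_iff_exists_adj]
  obtain ⟨u, hu⟩ := Fintype.exists_ne_of_one_lt_card h2 v
  obtain ⟨w⟩ := hG.preconnected v u
  cases w with
  | nil => exact absurd rfl hu.symm
  | cons h _ => exact ⟨_, h⟩

lemma exists_leaf (hG : G.IsTree) (h2 : 2 ≤ Fintype.card V) (v0 : V) :
    ∃ ℓ p : V, ℓ ≠ v0 ∧ G.Adj ℓ p ∧ ∀ w, G.Adj ℓ w → w = p := by
  have hcard := hG.card_edgeFinset
  have hsum : ∑ v, G.degree v = 2 * (Fintype.card V - 1) := by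
    rw [SimpleGraph.sum_degrees_eq_twice_card_edges]; omega
  by_contra hcon
  push_neg at hcon
  have hdeg2 : ∀ v : V, v ≠ v0 → 2 ≤ G.degree v := by
    intro v hv
    rcases Nat.lt_or_ge (G.degree v) 2 with hlt | h
    swap
    · exact h
    exfalso
    have h1 : G.degree v = 1 :=
      le_antisymm (Nat.lt_succ_iff.mp hlt) (degree_pos_of_connected hG.isConnected h2 v)
    have hcard1 : (G.neighborFinset v).card = 1 := by
      rwa [SimpleGraph.card_neighborFinset_eq_degree]
    obtain ⟨q, hq⟩ := Finset.card_eq_one.mp hcard1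
    have hadj : G.Adj v q := by
      rw [← SimpleGraph.mem_neighborFinset, hq]; exact Finset.mem_singleton_self q
    obtain ⟨w, hw, hwq⟩ := hcon v q hv hadj
    have hmem : w ∈ G.neighborFinset v := (SimpleGraph.mem_neighborFinset _ _ _).mpr hw
    rw [hq, Finset.mem_singleton] at hmem
    exact hwq hmem
  have hsplit : ∑ v, G.degree v
      = G.degree v0 + ∑ v ∈ Finset.univ.erase v0, G.degree v := by
    exact (Finset.add_sum_erase _ _ (Finset.mem_univ v0)).symm
  have hlb : 2 * (Fintype.card V - 1) ≤ ∑ v ∈ Finset.univ.erase v0, G.degree v := by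
    have : ∑ _v ∈ Finset.univ.erase v0, 2 ≤ ∑ v ∈ Finset.univ.erase v0, G.degree v :=
      Finset.sum_le_sum fun v hv => hdeg2 v (Finset.ne_of_mem_erase hv)
    calc 2 * (Fintype.card V - 1) = ∑ _v ∈ Finset.univ.erase v0, 2 := by
          rw [Finset.sum_const, Finset.card_erase_of_mem (Finset.mem_univ v0),
            Finset.card_univ, smul_eq_mul, Nat.mul_comm]
      _ ≤ _ := this
  have hd0 : 0 < G.degree v0 := degree_pos_of_connected hG.isConnected h2 v0
  omega

end LeafEx

theorem auxN {R : Type*} [CommRing R] (N : ℕ) :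
    ∀ {V : Type} [Fintype V] [DecidableEq V], Fintype.card V ≤ N →
    ∀ (G : SimpleGraph V) [DecidableRel G.Adj], G.IsTree →
    ∀ (a m : V → V → R) (ha : ∀ i j, a i j = a j i)
      (D : Matrix V V R),
      (∀ (i j : V) (p : G.Walk i j), p.IsPath → D i j = wWtV a m p) →
    ∀ (v0 : V) (mv : V → R),
      (∀ (v : V) (q : G.Walk v v0), q.IsPath → mv v = mProd m q) →
    (Matrix.of fun i j : {v : V // v ≠ v0} =>
        D i.1 j.1 - D i.1 v0 - mv i.1 * D v0 j.1).det
      = ∏ e ∈ G.edgeFinset,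
          Sym2.lift ⟨fun i j => a i j * (1 - m i j * m j i),
            fun i j => by dsimp only; rw [ha i j]; ring⟩ e := by
  induction N with
  | zero =>
    intro V _ _ hc G _ hG a m ha D hD v0 mv hmv
    obtain ⟨v⟩ := hG.isConnected.nonempty
    have : 0 < Fintype.card V := Fintype.card_pos_iff.mpr ⟨v⟩
    omega
  | succ N ih =>
    intro V _ _ hc G _ hG a m ha D hD v0 mv hmv
    by_cases h2 : 2 ≤ Fintype.card V
    case neg =>
      -- one-vertex case
      have h1 : Fintype.card V = 1 := by
        have : 0 < Fintype.card V := Fintype.card_pos_iff.mpr hG.isConnected.nonempty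
        omega
      haveI hsub : Subsingleton V := Fintype.card_le_one_iff_subsingleton.mp h1.le
      haveI : IsEmpty {v : V // v ≠ v0} := ⟨fun x => x.2 (Subsingleton.elim _ _)⟩
      have hE : G.edgeFinset = ∅ := by
        apply Finset.eq_empty_of_forall_notMem
        intro e he
        induction e with
        | h x y =>
          rw [SimpleGraph.mem_edgeFinset] at he
          exact he.ne (Subsingleton.elim _ _)
      rw [hE, Finset.prod_empty, Matrix.det_isEmpty]
    case pos =>
      obtain ⟨ℓ, q0, hlv0, hadj, huniq⟩ := exists_leaf hG h2 v0
      have hq0ℓ : ℓ ≠ q0 := hadj.ne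
      have hv0ℓ : v0 ≠ ℓ := fun h => hlv0 h.symm
      set ι := {v : V // v ≠ v0} with hιdef
      let ℓ' : ι := ⟨ℓ, hlv0⟩
      set B : Matrix ι ι R :=
        Matrix.of fun i j : ι => D i.1 j.1 - D i.1 v0 - mv i.1 * D v0 j.1 with hBdef
      set C : Matrix ι ι R := B.updateRow ℓ'
        (fun j => B ℓ' j - m ℓ q0 * (D q0 j.1 - D q0 v0 - mv q0 * D v0 j.1)) with hCdef
      have hBapp : ∀ i j : ι, B i j = D i.1 j.1 - D i.1 v0 - mv i.1 * D v0 j.1 :=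
        fun i j => rfl
      have hdetC : C.det = B.det := by
        by_cases hp0 : q0 = v0
        · have hz : (fun j : ι => B ℓ' j - m ℓ q0 * (D q0 j.1 - D q0 v0 - mv q0 * D v0 j.1))
              = B ℓ' := by
            funext j
            rw [hp0, D_self a m D hD, mv_root m v0 mv hmv]
            ring
          rw [hCdef, hz, Matrix.updateRow_eq_self]
        · have hij : ℓ' ≠ (⟨q0, hp0⟩ : ι) := fun h => hq0ℓ (congrArg Subtype.val h)
          have hrowfun : (fun j : ι => B ℓ' j - m ℓ q0 * (D q0 j.1 - D q0 v0 - mv q0 * D v0 j.1))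
              = B ℓ' + (-(m ℓ q0)) • B ⟨q0, hp0⟩ := by
            funext j
            simp only [Pi.add_apply, Pi.smul_apply, smul_eq_mul, hBapp]
            ring
          rw [hCdef, hrowfun]
          exact Matrix.det_updateRow_add_smul_self B hij (-(m ℓ q0))
      have hrow : ∀ j : ι, C ℓ' j
          = if j = ℓ' then a ℓ q0 * (1 - m ℓ q0 * m q0 ℓ) else 0 := by
        intro j
        have hCval : C ℓ' j
            = B ℓ' j - m ℓ q0 * (D q0 j.1 - D q0 v0 - mv q0 * D v0 j.1) := by
          rw [hCdef]
          exact congrFun (Matrix.updateRow_self (M := B)) j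
        by_cases hj : j = ℓ'
        · subst hj
          rw [if_pos rfl, hCval, hBapp]
          rw [D_self a m D hD ℓ]
          rw [leaf_D hG huniq a m D hD hv0ℓ]
          rw [leaf_mv hG huniq m v0 mv hmv hlv0]
          rw [D_adj a m D hD hadj.symm]
          rw [ha q0 ℓ]
          ring
        · rw [if_neg hj, hCval, hBapp]
          have hj1 : j.1 ≠ ℓ := fun h => hj (Subtype.ext h)
          rw [leaf_D hG huniq a m D hD hj1, leaf_D hG huniq a m D hD hv0ℓ,
            leaf_mv hG huniq m v0 mv hmv hlv0]
          ring
      -- split off the leaf row and column via a block decomposition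
      let ι2 := {x : ι // x ≠ ℓ'}
      let eqv : Unit ⊕ ι2 ≃ ι :=
        { toFun := Sum.elim (fun _ => ℓ') Subtype.val
          invFun := fun x => if h : x = ℓ' then Sum.inl () else Sum.inr ⟨x, h⟩
          left_inv := by
            rintro (⟨⟩ | ⟨x, hx⟩)
            · simp
            · simp [hx]
          right_inv := fun x => by
            by_cases h : x = ℓ'
            · simp [h]
            · simp [h] }
      have hsub : C.submatrix eqv eqv =
          Matrix.fromBlocks
            (Matrix.of fun _ _ : Unit => a ℓ q0 * (1 - m ℓ q0 * m q0 ℓ))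
            0
            (Matrix.of fun (x : ι2) (_ : Unit) => C x.1 ℓ')
            (Matrix.of fun x y : ι2 => B x.1 y.1) := by
        ext i j
        cases i with
        | inl u =>
          cases j with
          | inl u' =>
            show C ℓ' ℓ' = _
            rw [hrow ℓ', if_pos rfl]
            rfl
          | inr y =>
            show C ℓ' y.1 = _
            rw [hrow y.1, if_neg y.2]
            rfl
        | inr x =>
          cases j with
          | inl u' => rfl
          | inr y =>
            show C x.1 y.1 = B x.1 y.1
            rw [hCdef]
            exact congrFun (Matrix.updateRow_ne x.2) y.1
      have hCblocks : C.det
          = a ℓ q0 * (1 - m ℓ q0 * m q0 ℓ) * (Matrix.of fun x y : ι2 => B x.1 y.1).det := by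
        rw [← Matrix.det_submatrix_equiv_self eqv C, hsub, Matrix.det_fromBlocks_zero₁₂]
        congr 1
        rw [Matrix.det_unique]
        rfl
      -- the smaller tree obtained by deleting the leaf ℓ
      let V' := {v : V // v ≠ ℓ}
      let G' : SimpleGraph V' := G.comap Subtype.val
      haveI : DecidableRel G'.Adj := fun x y => (inferInstance : Decidable (G.Adj x.1 y.1))
      have havoid : ∀ {x j : V} (w : G.Walk x j), w.IsPath → x ≠ ℓ → j ≠ ℓ → ℓ ∉ w.support :=
        leaf_avoid huniq
      haveI hne' : Nonempty V' := ⟨⟨v0, hv0ℓ⟩⟩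
      have hG' : G'.IsTree := by
        refine ⟨⟨fun x y => ?_⟩, fun v c hc => ?_⟩
        · obtain ⟨q, hq, -⟩ := hG.existsUnique_path x.1 y.1
          have hno := havoid q hq x.2 y.2
          exact reach_lift q x.2 y.2 fun z hz hzl => hno (hzl ▸ hz)
        · exact hG.2 (c.map (SimpleGraph.Hom.comap Subtype.val G))
            ((SimpleGraph.Walk.map_isCycle_iff_of_injective
              Subtype.val_injective).mpr hc)
      let φ := SimpleGraph.Hom.comap (Subtype.val : V' → V) G
      have hφinj : Function.Injective (φ : V' → V) := Subtype.val_injective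
      let a' : V' → V' → R := fun i j => a i.1 j.1
      let m' : V' → V' → R := fun i j => m i.1 j.1
      let D' : Matrix V' V' R := Matrix.of fun i j => D i.1 j.1
      let mv' : V' → R := fun v => mv v.1
      let v0' : V' := ⟨v0, hv0ℓ⟩
      have ha' : ∀ i j, a' i j = a' j i := fun i j => ha i.1 j.1
      have hD' : ∀ (i j : V') (q : G'.Walk i j), q.IsPath → D' i j = wWtV a' m' q := by
        intro i j q hq
        calc D' i j = D i.1 j.1 := rfl
          _ = wWtV a m (q.map φ) :=
            hD i.1 j.1 (q.map φ) (SimpleGraph.Walk.map_isPath_of_injective hφinj hq)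
          _ = wWtV a' m' q := (wWtV_map a m q).symm
      have hmv' : ∀ (v : V') (q : G'.Walk v v0'), q.IsPath → mv' v = mProd m' q := by
        intro v q hq
        calc mv' v = mv v.1 := rfl
          _ = mProd m (q.map φ) :=
            hmv v.1 (q.map φ) (SimpleGraph.Walk.map_isPath_of_injective hφinj hq)
          _ = mProd m' q := (mProd_map m q).symm
      have hcard' : Fintype.card V' ≤ N := by
        have h1 : Fintype.card V' = Fintype.card V - 1 := by
          have h2' : Fintype.card {x : V // ¬x = ℓ}
              = Fintype.card V - Fintype.card {x : V // x = ℓ} :=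
            Fintype.card_subtype_compl _
          rw [Fintype.card_subtype_eq] at h2'
          exact h2'
        omega
      have hIH := ih hcard' G' hG' a' m' ha' D' hD' v0' mv' hmv'
      -- identify the inner block with the smaller matrix
      let τ : {v : V' // v ≠ v0'} ≃ ι2 :=
        { toFun := fun x =>
            ⟨⟨x.1.1, fun h => x.2 (Subtype.ext h)⟩,
              fun h => x.1.2 (congrArg Subtype.val h)⟩
          invFun := fun y =>
            ⟨⟨y.1.1, fun h => y.2 (Subtype.ext h)⟩,
              fun h => y.1.2 (congrArg Subtype.val h)⟩
          left_inv := fun x => Subtype.ext (Subtype.ext rfl)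
          right_inv := fun y => Subtype.ext (Subtype.ext rfl) }
      have hblockdet : (Matrix.of fun x y : ι2 => B x.1 y.1).det
          = (Matrix.of fun i j : {v : V' // v ≠ v0'} =>
              D' i.1 j.1 - D' i.1 v0' - mv' i.1 * D' v0' j.1).det := by
        rw [← Matrix.det_submatrix_equiv_self τ.symm]
        rfl
      -- edge set of the big tree
      have hnot : s(ℓ, q0) ∉ G'.edgeFinset.image (Sym2.map Subtype.val) := by
        intro h
        obtain ⟨e', he', heq⟩ := Finset.mem_image.mp h
        induction e' using Sym2.ind with
        | _ u v =>
          rw [Sym2.map_pair_eq, Sym2.eq_iff] at heq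
          rcases heq with ⟨h1, -⟩ | ⟨-, h2⟩
          · exact u.2 h1
          · exact v.2 h2
      have hedges : G.edgeFinset
          = insert s(ℓ, q0) (G'.edgeFinset.image (Sym2.map Subtype.val)) := by
        ext e
        induction e using Sym2.ind with
        | _ x y =>
          simp only [SimpleGraph.mem_edgeFinset, SimpleGraph.mem_edgeSet,
            Finset.mem_insert, Finset.mem_image]
          constructor
          · intro hxy
            by_cases hx : x = ℓ
            · subst hx
              left
              rw [huniq y hxy]
            by_cases hy : y = ℓ
            · subst hy
              left
              rw [huniq x hxy.symm, Sym2.eq_swap]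
            · right
              exact ⟨s(⟨x, hx⟩, ⟨y, hy⟩), (SimpleGraph.mem_edgeSet G').mpr hxy,
                by rw [Sym2.map_pair_eq]⟩
          · rintro (h | ⟨e', he', heq⟩)
            · rw [Sym2.eq_iff] at h
              rcases h with ⟨rfl, rfl⟩ | ⟨rfl, rfl⟩
              · exact hadj
              · exact hadj.symm
            · revert heq
              induction e' using Sym2.ind with
              | _ u v =>
                intro heq
                rw [Sym2.map_pair_eq, Sym2.eq_iff] at heq
                have huv : G.Adj u.1 v.1 := (SimpleGraph.mem_edgeSet G').mp he'
                rcases heq with ⟨h1, h2⟩ | ⟨h1, h2⟩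
                · rw [← h1, ← h2]; exact huv
                · rw [← h1, ← h2]; exact huv.symm
      -- assemble
      show B.det = _
      rw [← hdetC, hCblocks, hblockdet, hIH, hedges, Finset.prod_insert hnot,
        Finset.prod_image (fun e1 _ e2 _ h => Sym2.map.injective Subtype.val_injective h),
        Sym2.lift_mk]
      congr 1
      apply Finset.prod_congr rfl
      intro e' _
      induction e' using Sym2.ind with
      | _ u v => rw [Sym2.map_pair_eq, Sym2.lift_mk, Sym2.lift_mk]




/-- The edges of `G`, recorded as ordered pairs `(i, j)` with `i < j`. -/
def edgs {n : ℕ} (G : SimpleGraph (Fin n)) [DecidableRel G.Adj] :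
    Finset (Fin n × Fin n) :=
  Finset.univ.filter fun p => p.1 < p.2 ∧ G.Adj p.1 p.2

/-- The weighted length of a walk, for additive weights `a` and multiplicative weights
`m` on directed edges: along `i = i₀ → i₁ → ⋯ → i_k = j` it is
`Σ_{l} a_{i_l i_{l+1}} (m_{i_l → i_{l+1}} − 1) Π_{u < l} m_{i_u → i_{u+1}}`. -/
def wWt {R : Type*} [CommRing R] {n : ℕ} {G : SimpleGraph (Fin n)}
    (a m : Fin n → Fin n → R) {i j : Fin n} (p : G.Walk i j) : R :=
  p.darts.foldr
    (fun d acc => a d.toProd.1 d.toProd.2 * (m d.toProd.1 d.toProd.2 - 1)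
      + m d.toProd.1 d.toProd.2 * acc) 0

/-- The third invariant `κ` of the general distance matrix of a tree. `T` is a tree
on `{1,…,n}` whose edge `{i,j}` carries an additive weight `a i j = a j i` and
directed multiplicative weights `m i j`, `m j i`, with distance matrix `D`. For a
vertex `v₀`, let `u` be the column of `D` at `v₀`, `w` the row of `D` at `v₀`, and
`mv v` the product of the directed multiplicative weights along the unique path from
`v` to `v₀`; then `κ(D, v₀) := det(D₀ − u·eᵀ − mv·wᵀ)`, the determinant taken over
the index set `V ∖ {v₀}`. For every vertex `v₀`,
`κ(D, v₀) = Π_{e ∈ E} a_e (1 − m_e m'_e)`: it is independent of `v₀` and of the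
tree structure, and is multiplicative over the edges. -/
theorem stmt_17 {R : Type*} [CommRing R] {n : ℕ}
    (G : SimpleGraph (Fin n)) [DecidableRel G.Adj] (hG : G.IsTree)
    (a m : Fin n → Fin n → R)
    (ha : ∀ i j : Fin n, G.Adj i j → a i j = a j i)
    (D : Matrix (Fin n) (Fin n) R)
    (hD : ∀ (i j : Fin n) (p : G.Walk i j), p.IsPath → D i j = wWt a m p) :
    ∀ (v0 : Fin n) (mv : Fin n → R),
      (∀ (v : Fin n) (p : G.Walk v v0), p.IsPath →
        mv v = (p.darts.map fun d => m d.toProd.1 d.toProd.2).prod) →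
      (Matrix.of fun i j : {v : Fin n // v ≠ v0} =>
          D i.1 j.1 - D i.1 v0 - mv i.1 * D v0 j.1).det
        = ∏ e ∈ edgs G, a e.1 e.2 * (1 - m e.1 e.2 * m e.2 e.1) := by

  intro v0 mv hmv
  set a2 : Fin n → Fin n → R := fun i j => if i ≤ j then a i j else a j i with haa2def
  have ha2symm : ∀ i j, a2 i j = a2 j i := by
    intro i j
    rw [haa2def]
    dsimp only
    rcases le_total i j with h | h
    · rcases eq_or_lt_of_le h with rfl | hlt
      · rfl
      · rw [if_pos h, if_neg (not_le.mpr hlt)]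
    · rcases eq_or_lt_of_le h with rfl | hlt
      · rfl
      · rw [if_pos h, if_neg (not_le.mpr hlt)]
  have ha2adj : ∀ i j, G.Adj i j → a2 i j = a i j := by
    intro i j hij
    rw [haa2def]
    dsimp only
    split
    · rfl
    · exact (ha i j hij).symm
  have hwalk : ∀ {i j : Fin n} (p : G.Walk i j), wWtV a2 m p = wWtV a m p := by
    intro i j p
    induction p with
    | nil => rfl
    | cons h q ih => rw [wWtV_cons, wWtV_cons, ih, ha2adj _ _ h]
  have hD' : ∀ (i j : Fin n) (p : G.Walk i j), p.IsPath → D i j = wWtV a2 m p := by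
    intro i j p hp
    rw [hwalk p]
    exact hD i j p hp
  have hmv' : ∀ (v : Fin n) (q : G.Walk v v0), q.IsPath → mv v = mProd m q := hmv
  have hkey := auxN (R := R) (Fintype.card (Fin n)) (le_refl _) G hG a2 m ha2symm D hD'
    v0 mv hmv'
  rw [hkey]
  refine (Finset.prod_bij (fun e _ => s(e.1, e.2)) ?_ ?_ ?_ ?_).symm
  · intro e he
    obtain ⟨-, -, hadj⟩ := Finset.mem_filter.mp he
    exact SimpleGraph.mem_edgeFinset.mpr ((SimpleGraph.mem_edgeSet G).mpr hadj)
  · intro e1 h1 e2 h2 heq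
    obtain ⟨-, hlt1, -⟩ := Finset.mem_filter.mp h1
    obtain ⟨-, hlt2, -⟩ := Finset.mem_filter.mp h2
    rw [Sym2.eq_iff] at heq
    rcases heq with ⟨ha1, ha2⟩ | ⟨ha1, ha2⟩
    · exact Prod.ext ha1 ha2
    · rw [← ha1, ← ha2] at hlt2
      exact absurd hlt1 (asymm hlt2)
  · intro e he
    induction e using Sym2.ind with
    | _ x y =>
      have hadj : G.Adj x y := (SimpleGraph.mem_edgeSet G).mp
        (SimpleGraph.mem_edgeFinset.mp he)
      rcases lt_trichotomy x y with hlt | heq | hlt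
      · exact ⟨(x, y), Finset.mem_filter.mpr ⟨Finset.mem_univ _, hlt, hadj⟩, rfl⟩
      · exact absurd heq hadj.ne
      · exact ⟨(y, x), Finset.mem_filter.mpr ⟨Finset.mem_univ _, hlt, hadj.symm⟩,
          Sym2.eq_swap⟩
  · intro e he
    obtain ⟨-, hlt, hadj⟩ := Finset.mem_filter.mp he
    rw [Sym2.lift_mk]
    dsimp only
    rw [ha2adj _ _ hadj]
end

section
/- Let R be a commutative unital ring and T a tree on vertex set V = {1,…,n} with edge set E, where each edge {i,j} carries two directed multiplicative weights m_{i→j}, m_{j→i} ∈ R; for e = {i,j} write (m_e, m'_e) = (m_{i→j}, m_{j→i}). Let D*_T ∈ R^{n×n} be the multiplicative distance matrix: (D*_T)_{ii} = 1 and (D*_T)_{ij} = Π_{l=0}^{k−1} m_{i_l → i_{l+1}}, where i = i_0, i_1, …, i_k = j is the unique path in T from i to j. Then det(D*_T) = Π_{e ∈ E} (1 − m_e m'_e) and cof(D*_T) = Π_{e ∈ E} (1 − m_e m'_e) + Σ_{e ∈ E} (1 − m_e)(1 − m'_e)·Π_{f ∈ E∖{e}} (1 − m_f m'_f). In particular both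 quantities depend only on the edge-weights and not on the tree structure. -/
/-- The cofactor-sum of a square matrix: the sum over all `i, j` of
`(-1)^(i+j)` times the determinant of the submatrix obtained by deleting
row `i` and column `j`. (For the empty matrix we set it to `0`.) -/
def cofSum {R : Type*} [CommRing R] : ∀ {n : ℕ}, Matrix (Fin n) (Fin n) R → R
  | 0, _ => 0
  | m + 1, A => ∑ i : Fin (m + 1), ∑ j : Fin (m + 1),
      (-1 : R) ^ ((i : ℕ) + (j : ℕ)) * (A.submatrix i.succAbove j.succAbove).det

open Matrix SimpleGraph

section BordMatrix
variable {R : Type*} [CommRing R]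

/-- Border a matrix with a `0` corner and rows/columns of ones. -/
def bord {n : ℕ} (A : Matrix (Fin n) (Fin n) R) : Matrix (Fin (n+1)) (Fin (n+1)) R :=
  Matrix.of fun i j =>
    Fin.cases (Fin.cases 0 (fun _ => 1) j) (fun i' => Fin.cases 1 (fun j' => A i' j') j) i

@[simp] lemma bord_zero_zero {n : ℕ} (A : Matrix (Fin n) (Fin n) R) : bord A 0 0 = 0 := rfl
@[simp] lemma bord_zero_succ {n : ℕ} (A : Matrix (Fin n) (Fin n) R) (j : Fin n) :
    bord A 0 j.succ = 1 := rfl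
@[simp] lemma bord_succ_zero {n : ℕ} (A : Matrix (Fin n) (Fin n) R) (i : Fin n) :
    bord A i.succ 0 = 1 := rfl
@[simp] lemma bord_succ_succ {n : ℕ} (A : Matrix (Fin n) (Fin n) R) (i j : Fin n) :
    bord A i.succ j.succ = A i j := rfl

lemma cofSum_eq_neg_det_bord {n : ℕ} (A : Matrix (Fin (n+1)) (Fin (n+1)) R) :
    cofSum A = - (bord A).det := by
  rw [det_succ_row_zero, Fin.sum_univ_succ]
  simp only [Fin.val_zero, pow_zero, one_mul, bord_zero_zero, zero_mul, mul_zero, zero_add,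
    bord_zero_succ, mul_one, Fin.val_succ]
  have h1 : ∀ k : Fin (n+1),
      ((bord A).submatrix Fin.succ (Fin.succAbove k.succ)).det
        = ∑ i : Fin (n+1), (-1 : R) ^ (i : ℕ) * (A.submatrix i.succAbove k.succAbove).det := by
    intro k
    rw [det_succ_column_zero]
    congr 1; funext i
    have e0 : ((bord A).submatrix Fin.succ (Fin.succAbove k.succ)) i 0 = 1 := by
      simp [Matrix.submatrix_apply, Fin.succ_succAbove_zero]
    rw [e0, mul_one]
    have e1 : ((bord A).submatrix Fin.succ (Fin.succAbove k.succ)).submatrix i.succAbove Fin.succ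
        = A.submatrix i.succAbove k.succAbove := by
      ext a b
      simp [Matrix.submatrix_apply, Fin.succ_succAbove_succ]
    rw [e1]
  simp only [h1]
  show (∑ i : Fin (n+1), ∑ j : Fin (n+1),
      (-1 : R) ^ ((i : ℕ) + (j : ℕ)) * (A.submatrix i.succAbove j.succAbove).det) = _
  rw [Finset.sum_comm, ← Finset.sum_neg_distrib]
  refine Finset.sum_congr rfl fun j _ => ?_
  rw [Finset.mul_sum, ← Finset.sum_neg_distrib]
  refine Finset.sum_congr rfl fun i _ => ?_
  simp only [pow_add, pow_succ, pow_zero]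
  ring

end BordMatrix

section GraphLemmas

lemma tree_exists_leaf {V : Type*} [Fintype V] [DecidableEq V]
    (G : SimpleGraph V) [DecidableRel G.Adj] (hG : G.IsTree)
    (h2 : 2 ≤ Fintype.card V) :
    ∃ v u : V, u ≠ v ∧ ∀ x, G.Adj v x ↔ x = u := by
  have hdeg : ∀ v : V, 0 < G.degree v := by
    intro v
    rw [G.degree_pos_iff_exists_adj v]
    obtain ⟨w, hw⟩ := Fintype.exists_ne_of_one_lt_card (by omega) v
    obtain ⟨p⟩ := hG.isConnected v w
    cases p with
    | nil => exact absurd rfl hw.symm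
    | cons h q => exact ⟨_, h⟩
  have hsum : ∑ v, G.degree v = 2 * (Fintype.card V - 1) := by
    rw [G.sum_degrees_eq_twice_card_edges]
    have := hG.card_edgeFinset
    omega
  have hex : ∃ v : V, G.degree v = 1 := by
    by_contra hc
    push_neg at hc
    have hge : ∀ v : V, 2 ≤ G.degree v := by
      intro v
      have h1 := hdeg v
      have h2 := hc v
      omega
    have := Finset.sum_le_sum (fun v (_ : v ∈ Finset.univ) => hge v)
    simp only [Finset.sum_const, Finset.card_univ, smul_eq_mul] at this
    rw [hsum] at this
    omega
  obtain ⟨v, hv⟩ := hex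
  rw [← card_neighborFinset_eq_degree, Finset.card_eq_one] at hv
  obtain ⟨u, hu⟩ := hv
  refine ⟨v, u, ?_, ?_⟩
  · intro h
    subst h
    have : u ∈ G.neighborFinset u := by rw [hu]; exact Finset.mem_singleton_self u
    exact G.notMem_neighborFinset_self u this
  · intro x
    rw [← mem_neighborFinset, hu, Finset.mem_singleton]

lemma leaf_notMem_support {V : Type*} [DecidableEq V] {G : SimpleGraph V} {v u : V}
    (hleaf : ∀ x, G.Adj v x ↔ x = u) {x y : V} {p : G.Walk x y} (hp : p.IsPath)
    (hx : v ≠ x) (hy : v ≠ y) : v ∉ p.support := by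
  intro hv
  have hspec := p.take_spec hv
  have hnd : ((p.takeUntil v hv).support ++ (p.dropUntil v hv).support.tail).Nodup := by
    rw [← SimpleGraph.Walk.support_append, hspec]
    exact hp.support_nodup
  have hu2 : u ∈ (p.dropUntil v hv).support.tail := by
    cases hq : p.dropUntil v hv with
    | nil => exact absurd rfl hy
    | cons h q =>
      have hz := (hleaf _).mp h
      subst hz
      simp only [SimpleGraph.Walk.support_cons, List.tail_cons]
      exact SimpleGraph.Walk.start_mem_support q
  have hu1 : u ∈ (p.takeUntil v hv).support := by
    rw [← List.mem_reverse, ← SimpleGraph.Walk.support_reverse]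
    cases hq : (p.takeUntil v hv).reverse with
    | nil => exact absurd rfl hx
    | cons h q =>
      have hz := (hleaf _).mp h
      subst hz
      simp only [SimpleGraph.Walk.support_cons]
      exact List.mem_cons_of_mem _ (SimpleGraph.Walk.start_mem_support q)
  exact (List.disjoint_of_nodup_append hnd) hu1 hu2

variable {n : ℕ} {G : SimpleGraph (Fin (n+2))} {v u : Fin (n+2)}
  {G' : SimpleGraph (Fin (n+1))}

lemma walk_pullback (hG' : ∀ a b, G'.Adj a b ↔ G.Adj (v.succAbove a) (v.succAbove b)) :
    ∀ {x y : Fin (n+2)} (p : G.Walk x y), v ∉ p.support →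
    ∀ a b, v.succAbove a = x → v.succAbove b = y → G'.Reachable a b := by
  intro x y p
  induction p with
  | nil =>
    intro _ a b ha hb
    have : a = b := Fin.succAbove_right_injective (ha.trans hb.symm)
    exact this ▸ Reachable.refl a
  | cons h q ih =>
    rename_i x' z' y'
    intro hv a b ha hb
    simp only [SimpleGraph.Walk.support_cons, List.mem_cons] at hv
    push_neg at hv
    have hz : z' ≠ v := fun h => hv.2 (h ▸ SimpleGraph.Walk.start_mem_support q)
    obtain ⟨c, hc⟩ := Fin.exists_succAbove_eq hz
    have hadj : G'.Adj a c := (hG' a c).mpr (by rw [ha, hc]; exact h)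
    exact (hadj.reachable).trans (ih hv.2 c b hc hb)

lemma tree_pullback (hG' : ∀ a b, G'.Adj a b ↔ G.Adj (v.succAbove a) (v.succAbove b))
    (hG : G.IsTree) (hleaf : ∀ x, G.Adj v x ↔ x = u) : G'.IsTree := by
  constructor
  · constructor
    · intro a b
      obtain ⟨p, hp, -⟩ := hG.existsUnique_path (v.succAbove a) (v.succAbove b)
      exact walk_pullback hG' p
        (leaf_notMem_support hleaf hp (Fin.ne_succAbove v a) (Fin.ne_succAbove v b)) a b rfl rfl
  · intro a c hc
    have hinj : Function.Injective (v.succAbove) := Fin.succAbove_right_injective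
    have : ((c.map ⟨v.succAbove, fun h => (hG' _ _).mp h⟩).IsCycle) :=
      (SimpleGraph.Walk.map_isCycle_iff_of_injective hinj).mpr hc
    exact hG.2 _ this

lemma mem_edgs {k : ℕ} {H : SimpleGraph (Fin k)} [DecidableRel H.Adj]
    {e : Fin k × Fin k} : e ∈ edgs H ↔ e.1 < e.2 ∧ H.Adj e.1 e.2 := by
  simp [edgs]

variable [DecidableRel G.Adj] [DecidableRel G'.Adj]

lemma edgs_decomp (hG' : ∀ a b, G'.Adj a b ↔ G.Adj (v.succAbove a) (v.succAbove b))
    (hvu : u ≠ v) (hleaf : ∀ x, G.Adj v x ↔ x = u) :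
    ∃ ev : Fin (n+2) × Fin (n+2), (ev = (u,v) ∨ ev = (v,u)) ∧
      ev ∉ (edgs G').image (fun p => (v.succAbove p.1, v.succAbove p.2)) ∧
      edgs G = insert ev ((edgs G').image fun p => (v.succAbove p.1, v.succAbove p.2)) := by
  have hadj : G.Adj v u := (hleaf u).mpr rfl
  have himg : ∀ e : Fin (n+2) × Fin (n+2),
      e ∈ (edgs G').image (fun p => (v.succAbove p.1, v.succAbove p.2)) ↔
      (e.1 < e.2 ∧ G.Adj e.1 e.2 ∧ e.1 ≠ v ∧ e.2 ≠ v) := by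
    intro e
    simp only [Finset.mem_image, mem_edgs]
    constructor
    · rintro ⟨p, ⟨hlt, hA⟩, rfl⟩
      exact ⟨(Fin.strictMono_succAbove v) hlt, (hG' _ _).mp hA,
        Fin.succAbove_ne v p.1, Fin.succAbove_ne v p.2⟩
    · rintro ⟨hlt, hA, h1, h2⟩
      obtain ⟨a, ha⟩ := Fin.exists_succAbove_eq h1
      obtain ⟨b, hb⟩ := Fin.exists_succAbove_eq h2
      refine ⟨(a, b), ⟨?_, ?_⟩, ?_⟩
      · rw [← Fin.succAbove_lt_succAbove_iff (p := v), ha, hb]; exact hlt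
      · rw [hG', ha, hb]; exact hA
      · simp [ha, hb]
  rcases lt_or_gt_of_ne hvu with hlt | hlt
  · refine ⟨(u, v), Or.inl rfl, ?_, ?_⟩
    · rw [himg]; simp
    · ext e
      rw [mem_edgs, Finset.mem_insert, himg]
      constructor
      · rintro ⟨h1, h2⟩
        by_cases he1 : e.1 = v
        · exfalso
          have := (hleaf e.2).mp (he1 ▸ h2)
          rw [he1, this] at h1
          exact absurd h1 (not_lt.mpr hlt.le)
        · by_cases he2 : e.2 = v
          · left
            have := (hleaf e.1).mp (he2 ▸ h2.symm)
            rw [Prod.ext_iff, this, he2]; exact ⟨rfl, rfl⟩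
          · right; exact ⟨h1, h2, he1, he2⟩
      · rintro (rfl | ⟨h1, h2, -, -⟩)
        · exact ⟨hlt, hadj.symm⟩
        · exact ⟨h1, h2⟩
  · refine ⟨(v, u), Or.inr rfl, ?_, ?_⟩
    · rw [himg]; simp
    · ext e
      rw [mem_edgs, Finset.mem_insert, himg]
      constructor
      · rintro ⟨h1, h2⟩
        by_cases he1 : e.1 = v
        · left
          have := (hleaf e.2).mp (he1 ▸ h2)
          rw [Prod.ext_iff, this, he1]; exact ⟨rfl, rfl⟩
        · by_cases he2 : e.2 = v
          · exfalso
            have := (hleaf e.1).mp (he2 ▸ h2.symm)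
            rw [he2, this] at h1
            exact absurd h1 (not_lt.mpr hlt.le)
          · right; exact ⟨h1, h2, he1, he2⟩
      · rintro (rfl | ⟨h1, h2, -, -⟩)
        · exact ⟨hlt, hadj⟩
        · exact ⟨h1, h2⟩

lemma phi_injective : Function.Injective
    (fun p : Fin (n+1) × Fin (n+1) => (v.succAbove p.1, v.succAbove p.2)) := by
  intro p q h
  simp only [Prod.mk.injEq] at h
  exact Prod.ext (Fin.succAbove_right_injective h.1) (Fin.succAbove_right_injective h.2)

end GraphLemmas

lemma tree_det_aux {R : Type*} [CommRing R] :
    ∀ (n : ℕ) (G : SimpleGraph (Fin (n+1))) (inst : DecidableRel G.Adj),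
      G.IsTree → ∀ (m : Fin (n+1) → Fin (n+1) → R) (D : Matrix (Fin (n+1)) (Fin (n+1)) R),
      (∀ (i j : Fin (n+1)) (p : G.Walk i j), p.IsPath →
        D i j = (p.darts.map fun d => m d.toProd.1 d.toProd.2).prod) →
      D.det = ∏ e ∈ @edgs _ G inst, (1 - m e.1 e.2 * m e.2 e.1) ∧
      (bord D).det = -(∏ e ∈ @edgs _ G inst, (1 - m e.1 e.2 * m e.2 e.1)
          + ∑ e ∈ @edgs _ G inst, (1 - m e.1 e.2) * (1 - m e.2 e.1)
              * ∏ f ∈ (@edgs _ G inst).erase e, (1 - m f.1 f.2 * m f.2 f.1)) := by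
  intro n
  induction n with
  | zero =>
    intro G inst hG m D hD
    have hE : @edgs _ G inst = ∅ := by
      ext e
      simp only [mem_edgs, Finset.notMem_empty, iff_false, not_and]
      intro h
      have h1 := e.1.isLt
      have h2 := e.2.isLt
      have h3 : (e.1 : ℕ) < (e.2 : ℕ) := h
      omega
    have hD00 : D 0 0 = 1 := by simpa using hD 0 0 SimpleGraph.Walk.nil SimpleGraph.Walk.IsPath.nil
    constructor
    · rw [hE, Finset.prod_empty, Matrix.det_fin_one]
      have : (0 : Fin 1) = Fin.last 0 := rfl
      exact hD00
    · rw [hE]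
      simp only [Finset.prod_empty, Finset.sum_empty, add_zero]
      rw [Matrix.det_fin_two]
      have h1 : (1 : Fin 2) = (0 : Fin 1).succ := rfl
      rw [h1, bord_zero_zero, bord_zero_succ, bord_succ_zero, bord_succ_succ, hD00]
      ring
  | succ n ih =>
    intro G inst hG m D hD
    obtain ⟨v, u₀, hu₀v, hleaf⟩ := tree_exists_leaf G hG (by simp)
    obtain ⟨u', hu'⟩ := Fin.exists_succAbove_eq hu₀v
    set u : Fin (n+2) := v.succAbove u' with hudef
    have huv : u ≠ v := Fin.succAbove_ne v u'
    have hu0 : u₀ = u := hu'.symm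
    subst hu0
    -- the smaller graph
    set G' : SimpleGraph (Fin (n+1)) := G.comap v.succAbove with hG'def
    letI instG' : DecidableRel G'.Adj := fun a b => inst (v.succAbove a) (v.succAbove b)
    have hG'iff : ∀ a b, G'.Adj a b ↔ G.Adj (v.succAbove a) (v.succAbove b) := fun a b => Iff.rfl
    have hG'tree : G'.IsTree := tree_pullback hG'iff hG hleaf
    set m' : Fin (n+1) → Fin (n+1) → R := fun a b => m (v.succAbove a) (v.succAbove b) with hm'def
    set D' : Matrix (Fin (n+1)) (Fin (n+1)) R := D.submatrix v.succAbove v.succAbove with hD'def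
    have hD' : ∀ (a b : Fin (n+1)) (p : G'.Walk a b), p.IsPath →
        D' a b = (p.darts.map fun d => m' d.toProd.1 d.toProd.2).prod := by
      intro a b p hp
      have h1 := hD _ _ (p.map ⟨v.succAbove, fun {x y} h => h⟩)
        (SimpleGraph.Walk.map_isPath_of_injective Fin.succAbove_right_injective hp)
      rw [SimpleGraph.Walk.darts_map, List.map_map] at h1
      exact h1
    obtain ⟨ihdet, ihbord⟩ := ih G' instG' hG'tree m' D' hD'
    obtain ⟨ev, hev_or, hev_nmem, hedgs⟩ := edgs_decomp hG'iff hu₀v hleaf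
    have hφinj : ∀ x ∈ @edgs _ G' instG', ∀ y ∈ @edgs _ G' instG',
        (fun p : Fin (n+1) × Fin (n+1) => (v.succAbove p.1, v.succAbove p.2)) x
          = (fun p : Fin (n+1) × Fin (n+1) => (v.succAbove p.1, v.succAbove p.2)) y → x = y :=
      fun x _ y _ h => phi_injective h
    -- entries of D
    have hDdiag : ∀ i, D i i = 1 := fun i => by
      simpa using hD i i SimpleGraph.Walk.nil SimpleGraph.Walk.IsPath.nil
    have hadjvu : G.Adj v u := (hleaf u).mpr rfl
    have hkey : ∀ b : Fin (n+1), ∃ q : G.Walk u (v.succAbove b), q.IsPath ∧ v ∉ q.support ∧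
        D u (v.succAbove b) = (q.darts.map fun d => m d.toProd.1 d.toProd.2).prod := by
      intro b
      obtain ⟨p', hp', -⟩ := hG'tree.existsUnique_path u' b
      have hmp : (p'.map ⟨v.succAbove, fun {x y} h => h⟩).IsPath :=
        SimpleGraph.Walk.map_isPath_of_injective Fin.succAbove_right_injective hp'
      refine ⟨p'.map ⟨v.succAbove, fun {x y} h => h⟩, hmp, ?_, hD _ _ _ hmp⟩
      rw [SimpleGraph.Walk.support_map]
      intro hmem
      obtain ⟨c, -, hc⟩ := List.mem_map.mp hmem
      exact Fin.succAbove_ne v c hc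
    have hrowv : ∀ j, j ≠ v → D v j = m v u * D u j := by
      intro j hj
      obtain ⟨b, hb⟩ := Fin.exists_succAbove_eq hj
      subst hb
      obtain ⟨q, hq, hvq, hDuj⟩ := hkey b
      have hw : (SimpleGraph.Walk.cons hadjvu q).IsPath :=
        (SimpleGraph.Walk.cons_isPath_iff _ _).mpr ⟨hq, hvq⟩
      have h2 := hD _ _ _ hw
      rw [SimpleGraph.Walk.darts_cons, List.map_cons, List.prod_cons] at h2
      rw [h2, hDuj]
    have hDuv : D u v = m u v := by
      have hw : (SimpleGraph.Walk.cons hadjvu.symm SimpleGraph.Walk.nil).IsPath := by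
        rw [SimpleGraph.Walk.cons_isPath_iff]
        refine ⟨SimpleGraph.Walk.IsPath.nil, ?_⟩
        simp [huv]
      simpa using hD _ _ _ hw
    have hcolv : ∀ i, i ≠ v → D i v = D i u * m u v := by
      intro i hi
      obtain ⟨c, hc⟩ := Fin.exists_succAbove_eq hi
      subst hc
      obtain ⟨q, hq, hvq, -⟩ := hkey c
      have hw : (SimpleGraph.Walk.cons hadjvu q).IsPath :=
        (SimpleGraph.Walk.cons_isPath_iff _ _).mpr ⟨hq, hvq⟩
      have h2 := hD _ _ _ hw.reverse
      rw [SimpleGraph.Walk.reverse_cons, SimpleGraph.Walk.darts_append, List.map_append,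
        List.prod_append, SimpleGraph.Walk.darts_cons, SimpleGraph.Walk.darts_nil] at h2
      simp only [List.map_cons, List.map_nil, List.prod_cons, List.prod_nil, mul_one] at h2
      rw [h2, ← hD _ _ q.reverse hq.reverse]
    -- row elimination values
    have hrowvals : ∀ j, D v j - m v u * D u j = if j = v then 1 - m v u * m u v else 0 := by
      intro j
      by_cases hj : j = v
      · subst hj
        rw [if_pos rfl, hDdiag, hDuv]
      · rw [if_neg hj, hrowv j hj]
        ring
    have hcolvals : ∀ i, i ≠ v → D i v - m u v * D i u = 0 := by
      intro i hi
      rw [hcolv i hi]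
      ring
    -- Part 1: determinant
    have hsubrow : ∀ (r : Fin (n+2) → R),
        (D.updateRow v r).submatrix v.succAbove v.succAbove = D' := by
      intro r
      ext a b
      rw [hD'def]
      simp [Matrix.submatrix_apply, Matrix.updateRow_ne (Fin.succAbove_ne v a)]
    have hpart1 : D.det = (1 - m v u * m u v) * D'.det := by
      have h1 : (D.updateRow v (D v + (-(m v u)) • D u)).det = D.det :=
        Matrix.det_updateRow_add_smul_self D (Ne.symm hu₀v) _
      rw [← h1, Matrix.det_succ_row _ v]
      rw [Finset.sum_eq_single_of_mem v (Finset.mem_univ v)]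
      · rw [Matrix.updateRow_self]
        simp only [Pi.add_apply, Pi.smul_apply, smul_eq_mul]
        have hv : D v v + -(m v u) * D u v = 1 - m v u * m u v := by
          have := hrowvals v
          rw [if_pos rfl] at this
          linear_combination this
        rw [hv, hsubrow]
        have heven : (-1 : R) ^ ((v : ℕ) + (v : ℕ)) = 1 := Even.neg_one_pow ⟨v, rfl⟩
        rw [heven, one_mul]
      · intro j _ hj
        rw [Matrix.updateRow_self]
        simp only [Pi.add_apply, Pi.smul_apply, smul_eq_mul]
        have hz : D v j + -(m v u) * D u j = 0 := by
          have := hrowvals j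
          rw [if_neg hj] at this
          linear_combination this
        rw [hz, mul_zero, zero_mul]
    -- edge product decomposition
    have hprod : ∏ e ∈ @edgs _ G inst, (1 - m e.1 e.2 * m e.2 e.1)
        = (1 - m v u * m u v) * ∏ e ∈ @edgs _ G' instG', (1 - m' e.1 e.2 * m' e.2 e.1) := by
      rw [hedgs, Finset.prod_insert hev_nmem, Finset.prod_image hφinj]
      congr 1
      rcases hev_or with rfl | rfl
      · show 1 - m u v * m v u = _
        ring
      · rfl
    refine ⟨?_, ?_⟩
    · rw [hpart1, ihdet, hprod]
    · -- Part 2 : bordered determinant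
      have hvsus : (v.succ : Fin (n+3)) ≠ u.succ := fun h => hu₀v (Fin.succ_injective _ h).symm
      have h0vs : (0 : Fin (n+3)) ≠ v.succ := (Fin.succ_ne_zero v).symm
      set B1 : Matrix (Fin (n+3)) (Fin (n+3)) R :=
        (bord D).updateRow v.succ ((bord D) v.succ + (-(m v u)) • (bord D) u.succ) with hB1def
      have hdB1 : B1.det = (bord D).det :=
        Matrix.det_updateRow_add_smul_self (bord D) hvsus _
      set B2 : Matrix (Fin (n+3)) (Fin (n+3)) R :=
        B1.updateCol v.succ (fun k => B1 k v.succ + (-(m u v)) • B1 k u.succ) with hB2def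
      have hdB2 : B2.det = B1.det := Matrix.det_updateCol_add_smul_self B1 hvsus _
      -- entries of B2
      have hB1ne : ∀ (i j : Fin (n+3)), i ≠ v.succ → B1 i j = bord D i j := by
        intro i j hi
        rw [hB1def, Matrix.updateRow_ne hi]
      have hB1row : ∀ j : Fin (n+3), B1 v.succ j = bord D v.succ j - m v u * bord D u.succ j := by
        intro j
        rw [hB1def, Matrix.updateRow_self]
        simp only [Pi.add_apply, Pi.smul_apply, smul_eq_mul]
        ring
      have hB2ne : ∀ (i j : Fin (n+3)), j ≠ v.succ → B2 i j = B1 i j := by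
        intro i j hj
        rw [hB2def, Matrix.updateCol_ne hj]
      have hB2col : ∀ i : Fin (n+3), B2 i v.succ = B1 i v.succ - m u v * B1 i u.succ := by
        intro i
        rw [hB2def, Matrix.updateCol_self, smul_eq_mul]
        ring
      have houter : ∀ i j : Fin (n+3), i ≠ v.succ → j ≠ v.succ → B2 i j = bord D i j := by
        intro i j hi hj
        rw [hB2ne i j hj, hB1ne i j hi]
      have hr0 : B2 v.succ 0 = 1 - m v u := by
        rw [hB2ne _ _ h0vs, hB1row 0, bord_succ_zero, bord_succ_zero]
        ring
      have hrj : ∀ j : Fin (n+2), j ≠ v → B2 v.succ j.succ = 0 := by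
        intro j hj
        have hjs : (j.succ : Fin (n+3)) ≠ v.succ := fun h => hj (Fin.succ_injective _ h)
        rw [hB2ne _ _ hjs, hB1row, bord_succ_succ, bord_succ_succ]
        have := hrowvals j
        rw [if_neg hj] at this
        linear_combination this
      have hrvs : B2 v.succ v.succ = 1 - m v u * m u v := by
        rw [hB2col, hB1row, hB1row, bord_succ_succ, bord_succ_succ, bord_succ_succ,
          bord_succ_succ]
        have h1 := hrowvals v
        rw [if_pos rfl] at h1
        have h2 := hrowvals u
        rw [if_neg hu₀v] at h2
        linear_combination h1 - m u v * h2
      have hc0 : B2 0 v.succ = 1 - m u v := by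
        rw [hB2col, hB1ne _ _ h0vs, hB1ne _ _ h0vs, bord_zero_succ, bord_zero_succ]
        ring
      have hci : ∀ i : Fin (n+2), i ≠ v → B2 i.succ v.succ = 0 := by
        intro i hi
        have his : (i.succ : Fin (n+3)) ≠ v.succ := fun h => hi (Fin.succ_injective _ h)
        rw [hB2col, hB1ne _ _ his, hB1ne _ _ his, bord_succ_succ, bord_succ_succ]
        have := hcolvals i hi
        linear_combination this
      -- the two surviving minors
      have hsubvs : B2.submatrix (Fin.succAbove v.succ) (Fin.succAbove v.succ) = bord D' := by
        ext a b
        show B2 ((v.succ).succAbove a) ((v.succ).succAbove b) = bord D' a b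
        induction a using Fin.cases with
        | zero =>
          induction b using Fin.cases with
          | zero =>
            rw [Fin.succ_succAbove_zero, houter _ _ h0vs h0vs, bord_zero_zero, bord_zero_zero]
          | succ b' =>
            rw [Fin.succ_succAbove_zero, Fin.succ_succAbove_succ,
              houter _ _ h0vs (fun h => Fin.succAbove_ne v b' (Fin.succ_injective _ h)),
              bord_zero_succ, bord_zero_succ]
        | succ a' =>
          induction b using Fin.cases with
          | zero =>
            rw [Fin.succ_succAbove_succ, Fin.succ_succAbove_zero,
              houter _ _ (fun h => Fin.succAbove_ne v a' (Fin.succ_injective _ h)) h0vs,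
              bord_succ_zero, bord_succ_zero]
          | succ b' =>
            rw [Fin.succ_succAbove_succ, Fin.succ_succAbove_succ,
              houter _ _ (fun h => Fin.succAbove_ne v a' (Fin.succ_injective _ h))
                (fun h => Fin.succAbove_ne v b' (Fin.succ_injective _ h)),
              bord_succ_succ, bord_succ_succ, hD'def]
            rfl
      have hdetN : (B2.submatrix (Fin.succAbove v.succ) (Fin.succAbove (0 : Fin (n+3)))).det
          = (-1:R)^(v : ℕ) * ((1 - m u v) * D'.det) := by
        rw [Matrix.det_succ_column _ (v : Fin (n+2))]
        rw [Finset.sum_eq_single_of_mem (0 : Fin (n+2)) (Finset.mem_univ _)]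
        · have hent : (B2.submatrix (Fin.succAbove v.succ) (Fin.succAbove (0 : Fin (n+3)))) 0 v
              = 1 - m u v := by
            show B2 ((v.succ).succAbove 0) ((0 : Fin (n+3)).succAbove v) = _
            rw [Fin.succ_succAbove_zero, Fin.succAbove_zero]
            exact hc0
          rw [hent]
          have hmat : ((B2.submatrix (Fin.succAbove v.succ) (Fin.succAbove (0 : Fin (n+3))))
              |>.submatrix (Fin.succAbove (0 : Fin (n+2))) (Fin.succAbove (v : Fin (n+2)))) = D' := by
            ext a b
            show B2 ((v.succ).succAbove ((0 : Fin (n+2)).succAbove a))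
                ((0 : Fin (n+3)).succAbove ((v : Fin (n+2)).succAbove b)) = D' a b
            rw [Fin.succAbove_zero, Fin.succAbove_zero, Fin.succ_succAbove_succ,
              houter _ _ (fun h => Fin.succAbove_ne v a (Fin.succ_injective _ h))
                (fun h => Fin.succAbove_ne v b (Fin.succ_injective _ h)),
              bord_succ_succ, hD'def]
            rfl
          rw [hmat]
          simp only [Fin.val_zero, zero_add]
          ring
        · intro i _ hi
          obtain ⟨k, hk⟩ := Fin.exists_succ_eq.mpr hi
          have hent0 : (B2.submatrix (Fin.succAbove v.succ) (Fin.succAbove (0 : Fin (n+3)))) i v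
              = 0 := by
            rw [← hk]
            show B2 ((v.succ).succAbove k.succ) ((0 : Fin (n+3)).succAbove v) = 0
            rw [Fin.succ_succAbove_succ, Fin.succAbove_zero]
            exact hci _ (Fin.succAbove_ne v k)
          rw [hent0, mul_zero, zero_mul]
      -- two-term Laplace expansion along row v.succ
      have h2terms : B2.det
          = (-1:R)^(((v.succ : Fin (n+3)) : ℕ) + ((0 : Fin (n+3)) : ℕ)) * B2 v.succ 0 *
              (B2.submatrix (Fin.succAbove v.succ) (Fin.succAbove (0 : Fin (n+3)))).det
            + (-1:R)^(((v.succ : Fin (n+3)) : ℕ) + ((v.succ : Fin (n+3)) : ℕ)) * B2 v.succ v.succ *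
              (B2.submatrix (Fin.succAbove v.succ) (Fin.succAbove v.succ)).det := by
        rw [Matrix.det_succ_row B2 v.succ]
        rw [← Finset.sum_subset (Finset.subset_univ ({0, v.succ} : Finset (Fin (n+3)))) ?_]
        · rw [Finset.sum_pair h0vs]
        · intro j _ hj
          simp only [Finset.mem_insert, Finset.mem_singleton] at hj
          push_neg at hj
          obtain ⟨k, hk⟩ := Fin.exists_succ_eq.mpr hj.1
          rw [← hk, hrj k (fun h => hj.2 (by rw [← hk, h])), mul_zero, zero_mul]
      -- assemble
      have hsumdec : ∑ e ∈ @edgs _ G inst, (1 - m e.1 e.2) * (1 - m e.2 e.1)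
            * ∏ f ∈ (@edgs _ G inst).erase e, (1 - m f.1 f.2 * m f.2 f.1)
          = (1 - m v u) * (1 - m u v)
              * (∏ e ∈ @edgs _ G' instG', (1 - m' e.1 e.2 * m' e.2 e.1))
            + (1 - m v u * m u v) * ∑ e ∈ @edgs _ G' instG', (1 - m' e.1 e.2) * (1 - m' e.2 e.1)
                * ∏ f ∈ (@edgs _ G' instG').erase e, (1 - m' f.1 f.2 * m' f.2 f.1) := by
        rw [hedgs, Finset.sum_insert hev_nmem]
        congr 1
        · rw [Finset.erase_insert hev_nmem, Finset.prod_image hφinj]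
          rcases hev_or with rfl | rfl
          · show (1 - m u v) * (1 - m v u) * _ = _
            ring
          · rfl
        · rw [Finset.sum_image hφinj, Finset.mul_sum]
          refine Finset.sum_congr rfl fun e' he' => ?_
          have hne : ev ≠ (v.succAbove e'.1, v.succAbove e'.2) := by
            intro h
            exact hev_nmem (h ▸ Finset.mem_image_of_mem _ he')
          rw [Finset.erase_insert_of_ne hne]
          rw [← Finset.image_erase phi_injective]
          rw [Finset.prod_insert (fun hmem => hev_nmem
            (Finset.image_subset_image (Finset.erase_subset _ _) hmem))]
          rw [Finset.prod_image (fun x _ y _ h => phi_injective h)]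
          rcases hev_or with rfl | rfl
          · show (1 - m' e'.1 e'.2) * (1 - m' e'.2 e'.1) * ((1 - m u v * m v u) * _) = _
            ring
          · ring
      have hs3 : (-1:R)^(v : ℕ) * (-1:R)^(v : ℕ) = 1 := by
        rw [← pow_add]
        exact Even.neg_one_pow ⟨v, rfl⟩
      have hbdet : (bord D).det = B2.det := by rw [hdB2, hdB1]
      rw [hbdet, h2terms, hr0, hrvs, hdetN, hsubvs, ihbord, ihdet, hprod, hsumdec]
      simp only [Fin.val_succ, Fin.val_zero, add_zero]
      have hs1 : (-1:R)^((v : ℕ)+1) = -(-1:R)^(v : ℕ) := by rw [pow_succ]; ring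
      have hs2 : (-1:R)^((v : ℕ)+1+((v : ℕ)+1)) = 1 := Even.neg_one_pow ⟨(v : ℕ)+1, by ring⟩
      rw [hs1, hs2]
      linear_combination (-(1 - m v u) * (1 - m u v)
        * (∏ e ∈ @edgs _ G' instG', (1 - m' e.1 e.2 * m' e.2 e.1))) * hs3



/-- Determinant and cofactor-sum of the multiplicative distance matrix of a tree.
`T` is a tree on `{1,…,n}` whose edge `{i,j}` carries directed multiplicative
weights `m i j`, `m j i`; `D*` has `(D*)_{ii} = 1` and `(D*)_{ij}` the product of
the directed weights along the unique path from `i` to `j`. Then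
`det(D*) = Π_{e∈E}(1 − m_e m'_e)` and `cof(D*) = Π_{e∈E}(1 − m_e m'_e)
+ Σ_{e∈E}(1 − m_e)(1 − m'_e)·Π_{f∈E∖{e}}(1 − m_f m'_f)`; in particular both
quantities depend only on the edge-weights and not on the tree structure. -/
theorem stmt_19 {R : Type*} [CommRing R] {n : ℕ}
    (G : SimpleGraph (Fin n)) [DecidableRel G.Adj] (hG : G.IsTree)
    (m : Fin n → Fin n → R)
    (D : Matrix (Fin n) (Fin n) R)
    (hD : ∀ (i j : Fin n) (p : G.Walk i j), p.IsPath →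
      D i j = (p.darts.map fun d => m d.toProd.1 d.toProd.2).prod) :
    D.det = ∏ e ∈ edgs G, (1 - m e.1 e.2 * m e.2 e.1)
    ∧ cofSum D
      = ∏ e ∈ edgs G, (1 - m e.1 e.2 * m e.2 e.1)
        + ∑ e ∈ edgs G, (1 - m e.1 e.2) * (1 - m e.2 e.1)
            * ∏ f ∈ (edgs G).erase e, (1 - m f.1 f.2 * m f.2 f.1) := by
  cases n with
  | zero =>
    exfalso
    obtain ⟨x⟩ := hG.isConnected.nonempty
    exact x.elim0
  | succ k =>
    obtain ⟨h1, h2⟩ := tree_det_aux k G ‹_› hG m D hD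
    refine ⟨h1, ?_⟩
    rw [cofSum_eq_neg_det_bord, h2, neg_neg]
end
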